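/- (Knothe–Rosenblatt pushforward, conditional part) Let p_{y,x} be a strictly positive probability density on ℝ^m × ℝ^d with marginal p_y and conditional densities p_{x|y}(x|y) = p_{y,x}(y,x)/p_y(y), and let p_z(z_y, z_x) = p_{z_y}(z_y) p_{z_x}(z_x) be a product probability density on ℝ^m × ℝ^d with strictly positive factors. Suppose T : ℝ^{m+d} → ℝ^{m+d} is a C¹ diffeomorphism of block-triangular form T(y, x) = (T^y(y), T^x(y, x)) with T_# p_{y,x} = p_z, and write the inverse as S(z_y, z_x) = (S^y(z_y), S^x(z_y, z_x)). Then for p_y-almost every y ∈ ℝ^m, the map x ↦ S^x(T^y(y), x) from ℝ^d to ℝ^d pushes p_{z_x} forward to the posterior p_{x|y}(·|y); i.e., if z_x is distributed with density p_{z_x}, then S^x(T^y(y), z_x) is distributed with density p_{x|y}(·|y). -/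

import Mathlib

/-!
Fix `y` and put `a = Ty y`, `g = Sx a`. Because `S` is block-triangular, its Jacobian at `(a, zx)`
factors as `det D Sy (a) * det D g (zx)`, so the pushforward identity at `(a, zx)` reads
`pzy a * pzx zx = J * |det D g (zx)| * pjoint (y, g zx)` with `J = |det D Sy (a)|`. Integrating in
`zx` and changing variables along the bijection `g` gives `pzy a = J * py y`; dividing,
`pzx = |det D g| * (pjoint (y, ·) / py y) ∘ g`, which is the change-of-variables formula saying
that `g` pushes `pzx` forward to the posterior.
-/

open MeasureTheory Function

theorem LinearMap.det_eq_det_mul_det_of_fst_comp_inr_eq_zero {R M N : Type*} [CommRing R]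
    [AddCommGroup M] [Module R M] [Module.Free R M] [Module.Finite R M]
    [AddCommGroup N] [Module R N] [Module.Free R N] [Module.Finite R N]
    (f : (M × N) →ₗ[R] (M × N)) (h : fst R M N ∘ₗ f ∘ₗ inr R M N = 0) :
    f.det = (fst R M N ∘ₗ f ∘ₗ inl R M N).det *
      (snd R M N ∘ₗ f ∘ₗ inr R M N).det := by
  let b := Module.Free.chooseBasis R M
  let b' := Module.Free.chooseBasis R N
  have hblocks : toMatrix (b.prod b') (b.prod b') f = Matrix.fromBlocks
      (toMatrix b b (fst R M N ∘ₗ f ∘ₗ inl R M N)) 0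
      (Matrix.of fun i j => b'.repr (f (b j, 0)).2 i)
      (toMatrix b' b' (snd R M N ∘ₗ f ∘ₗ inr R M N)) := by
    have h' : ∀ w, (f (0, w)).1 = 0 := fun w => congrArg (· w) h
    ext (i | i) (j | j) <;> simp [toMatrix_apply, Module.Basis.prod_apply, h']
  rw [← det_toMatrix (b.prod b'), hblocks, Matrix.det_fromBlocks_zero₁₂, det_toMatrix,
    det_toMatrix]

section Triangular

variable {E F : Type*} [NormedAddCommGroup E] [NormedSpace ℝ E] [FiniteDimensional ℝ E]
  [NormedAddCommGroup F] [NormedSpace ℝ F] [FiniteDimensional ℝ F]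

theorem det_fderiv_eq_mul_of_triangular {S : E × F → E × F} {φ : E → E} {ψ : E → F → F}
    (hsplit : ∀ z, S z = (φ z.1, ψ z.1 z.2)) {a : E} {w : F}
    (hS : DifferentiableAt ℝ S (a, w)) :
    (fderiv ℝ S (a, w)).det = (fderiv ℝ φ a).det * (fderiv ℝ (ψ a) w).det := by
  set L := fderiv ℝ S (a, w)
  have hL : HasFDerivAt S L (a, w) := hS.hasFDerivAt
  have hφ : HasFDerivAt φ (.fst ℝ E F ∘L L ∘L .inl ℝ E F) a := by
    simpa [hsplit] using (hL.comp a (hasFDerivAt_prodMk_left (𝕜 := ℝ) a w)).fst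
  have hψ : HasFDerivAt (ψ a) (.snd ℝ E F ∘L L ∘L .inr ℝ E F) w := by
    simpa [hsplit] using (hL.comp w (hasFDerivAt_prodMk_right a w)).snd
  have hzero : ContinuousLinearMap.fst ℝ E F ∘L L ∘L .inr ℝ E F = 0 := by
    have h := (hL.comp w (hasFDerivAt_prodMk_right a w)).fst
    simp only [comp_def, hsplit] at h
    exact h.unique (hasFDerivAt_const _ _)
  rw [hφ.fderiv, hψ.fderiv]
  exact LinearMap.det_eq_det_mul_det_of_fst_comp_inr_eq_zero (L : E × F →ₗ[ℝ] E × F)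
    (congrArg ContinuousLinearMap.toLinearMap hzero)

end Triangular

section ChangeOfVariables

variable {F : Type*} [NormedAddCommGroup F] [NormedSpace ℝ F] [FiniteDimensional ℝ F]
  [MeasurableSpace F] [BorelSpace F] (μ : Measure F) [μ.IsAddHaarMeasure]
  {g : F → F} {g' : F → F →L[ℝ] F}

theorem integral_abs_det_fderiv_smul_comp_of_bijective {G : Type*} [NormedAddCommGroup G]
    [NormedSpace ℝ G] (hg' : ∀ x, HasFDerivAt g (g' x) x) (hg : Bijective g) (f : F → G) :
    ∫ x, |(g' x).det| • f (g x) ∂μ = ∫ x, f x ∂μ := by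
  simpa [hg.surjective.range_eq] using (integral_image_eq_integral_abs_det_fderiv_smul μ
    MeasurableSet.univ (fun x _ => (hg' x).hasFDerivWithinAt) hg.injective.injOn f).symm

theorem map_withDensity_ofReal_of_abs_det_fderiv_mul
    (hg' : ∀ x, HasFDerivAt g (g' x) x) (hg : Bijective g) {p q : F → ℝ}
    (hpq : ∀ x, p x = |(g' x).det| * q (g x)) :
    (μ.withDensity fun x => ENNReal.ofReal (p x)).map g =
      μ.withDensity fun x => ENNReal.ofReal (q x) := by
  have hmeas : Measurable g :=
    (continuous_iff_continuousAt.2 fun x => (hg' x).continuousAt).measurable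
  ext B hB
  rw [Measure.map_apply hmeas hB, withDensity_apply _ (hmeas hB), withDensity_apply _ hB]
  have := lintegral_image_eq_lintegral_abs_det_fderiv_mul μ (hmeas hB)
    (fun x _ => (hg' x).hasFDerivWithinAt) hg.injective.injOn fun x => ENNReal.ofReal (q x)
  rw [Set.image_preimage_eq B hg.surjective] at this
  simp_rw [this, hpq, ENNReal.ofReal_mul (abs_nonneg _)]

end ChangeOfVariables

section Fibers

variable {α β : Type*} {T S : α × β → α × β} {Ty Sy : α → α} {Sx : α → β → β}

theorem Function.LeftInverse.fiber_inverse_of_triangular (hleft : LeftInverse S T)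
    (hT : ∀ y x, (T (y, x)).1 = Ty y) (hS : ∀ z, S z = (Sy z.1, Sx z.1 z.2)) (y : α) (x : β) :
    Sy (Ty y) = y ∧ Sx (Ty y) (T (y, x)).2 = x := by
  have h := hleft (y, x)
  rw [hS, hT] at h
  exact Prod.ext_iff.1 h

theorem Function.RightInverse.injective_of_triangular (hright : RightInverse S T)
    (hS : ∀ z, S z = (Sy z.1, Sx z.1 z.2)) (a : α) : Injective (Sx a) := fun z₁ z₂ h => by
  have := hright.injective (a₁ := (a, z₁)) (a₂ := (a, z₂)) (by rw [hS, hS, h])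
  exact (Prod.ext_iff.1 this).2

end Fibers

theorem knothe_rosenblatt_conditional_general
    (m d : ℕ)
    (pjoint : (Fin m → ℝ) × (Fin d → ℝ) → ℝ)
    (py : (Fin m → ℝ) → ℝ) (hpy : ∀ y, py y = ∫ x, pjoint (y, x))
    (pzy : (Fin m → ℝ) → ℝ) (pzx : (Fin d → ℝ) → ℝ)
    (hpzy_pos : ∀ zy, 0 < pzy zy)
    (hpzx_prob : ∫ zx, pzx zx = 1)
    (T S : (Fin m → ℝ) × (Fin d → ℝ) → (Fin m → ℝ) × (Fin d → ℝ))
    (hS : ContDiff ℝ 1 S)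
    (hleft : Function.LeftInverse S T) (hright : Function.RightInverse S T)
    (Ty : (Fin m → ℝ) → (Fin m → ℝ))
    (htriangular : ∀ y x, (T (y, x)).1 = Ty y)
    (Sy : (Fin m → ℝ) → (Fin m → ℝ))
    (Sx : (Fin m → ℝ) → (Fin d → ℝ) → (Fin d → ℝ))
    (hSsplit : ∀ z : (Fin m → ℝ) × (Fin d → ℝ), S z = (Sy z.1, Sx z.1 z.2))
    (hpush : ∀ v : (Fin m → ℝ) × (Fin d → ℝ),
      pzy v.1 * pzx v.2 = pjoint (S v) * |(fderiv ℝ S v).det|) :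
    ∀ᵐ y ∂(volume.withDensity fun y => ENNReal.ofReal (py y)),
      Measure.map (fun zx => Sx (Ty y) zx)
          (volume.withDensity fun zx => ENNReal.ofReal (pzx zx)) =
        volume.withDensity fun x => ENNReal.ofReal (pjoint (y, x) / py y) := by
  refine ae_of_all _ fun y => ?_
  set a := Ty y
  set g := Sx a
  have hSy : Sy a = y := (hleft.fiber_inverse_of_triangular htriangular hSsplit y 0).1
  have hg_bij : Bijective g := ⟨hright.injective_of_triangular hSsplit a,
    fun x => ⟨_, (hleft.fiber_inverse_of_triangular htriangular hSsplit y x).2⟩⟩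
  have hS_diff : Differentiable ℝ S := hS.differentiable one_ne_zero
  have hg_diff : Differentiable ℝ g := by
    simpa [hSsplit] using (hS_diff.comp ((differentiable_const a).prodMk differentiable_id)).snd
  set J := |(fderiv ℝ Sy a).det|
  have hjac : ∀ zx, pzy a * pzx zx = J * (|(fderiv ℝ g zx).det| * pjoint (y, g zx)) := by
    intro zx
    rw [hpush (a, zx), det_fderiv_eq_mul_of_triangular hSsplit (hS_diff _), hSsplit, hSy, abs_mul]
    ring
  have hmarg : pzy a = J * py y := calc
    pzy a = ∫ zx, pzy a * pzx zx := by rw [integral_const_mul, hpzx_prob, mul_one]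
    _ = J * ∫ zx, |(fderiv ℝ g zx).det| • pjoint (y, g zx) := by
      simp_rw [hjac, smul_eq_mul, integral_const_mul]
    _ = J * py y := by
      rw [integral_abs_det_fderiv_smul_comp_of_bijective volume
        (fun zx => (hg_diff zx).hasFDerivAt) hg_bij (fun x => pjoint (y, x)), hpy]
  have hJ_ne : J ≠ 0 := fun h => (hpzy_pos a).ne' (by rw [hmarg, h, zero_mul])
  have hpy_ne : py y ≠ 0 := fun h => (hpzy_pos a).ne' (by rw [hmarg, h, mul_zero])
  refine map_withDensity_ofReal_of_abs_det_fderiv_mul volume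
    (fun zx => (hg_diff zx).hasFDerivAt) hg_bij fun zx => ?_
  rw [mul_div_assoc', eq_div_iff hpy_ne]
  exact mul_left_cancel₀ hJ_ne (by rw [← hjac, hmarg]; ring)

/-- **Knothe–Rosenblatt pushforward, conditional part.** Let
`pjoint > 0` be a probability density on ℝ^m × ℝ^d with marginal `py` and
conditional densities `p_{x|y}(x|y) = pjoint (y,x) / py y`, and let
`pz (zy, zx) = pzy zy * pzx zx` with strictly positive factors. If `T` is a C¹
diffeomorphism of block-triangular form `T (y, x) = (Ty y, ...)` with
`T_# pjoint = pz` (density formula via the inverse `S`), and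
`S (zy, zx) = (Sy zy, Sx zy zx)`, then for `py`-almost every `y` the map
`zx ↦ Sx (Ty y) zx` pushes the density `pzx` forward to the posterior
`p_{x|y}(·|y)` (as an equality of measures with those densities). -/
theorem knothe_rosenblatt_conditional
    (m d : ℕ)
    (pjoint : (Fin m → ℝ) × (Fin d → ℝ) → ℝ)
    (hpjoint_pos : ∀ w, 0 < pjoint w) (hpjoint_prob : ∫ w, pjoint w = 1)
    (py : (Fin m → ℝ) → ℝ) (hpy : ∀ y, py y = ∫ x, pjoint (y, x))
    (pzy : (Fin m → ℝ) → ℝ) (pzx : (Fin d → ℝ) → ℝ)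
    (hpzy_pos : ∀ zy, 0 < pzy zy) (hpzx_pos : ∀ zx, 0 < pzx zx)
    (hpzy_prob : ∫ zy, pzy zy = 1) (hpzx_prob : ∫ zx, pzx zx = 1)
    (T S : (Fin m → ℝ) × (Fin d → ℝ) → (Fin m → ℝ) × (Fin d → ℝ))
    (hT : ContDiff ℝ 1 T) (hS : ContDiff ℝ 1 S)
    (hleft : Function.LeftInverse S T) (hright : Function.RightInverse S T)
    (Ty : (Fin m → ℝ) → (Fin m → ℝ))
    (htriangular : ∀ y x, (T (y, x)).1 = Ty y)
    (Sy : (Fin m → ℝ) → (Fin m → ℝ))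
    (Sx : (Fin m → ℝ) → (Fin d → ℝ) → (Fin d → ℝ))
    (hSsplit : ∀ z : (Fin m → ℝ) × (Fin d → ℝ), S z = (Sy z.1, Sx z.1 z.2))
    (hpush : ∀ v : (Fin m → ℝ) × (Fin d → ℝ),
      pzy v.1 * pzx v.2 = pjoint (S v) * |(fderiv ℝ S v).det|) :
    ∀ᵐ y ∂(volume.withDensity fun y => ENNReal.ofReal (py y)),
      Measure.map (fun zx => Sx (Ty y) zx)
          (volume.withDensity fun zx => ENNReal.ofReal (pzx zx)) =
        volume.withDensity fun x => ENNReal.ofReal (pjoint (y, x) / py y) :=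
  knothe_rosenblatt_conditional_general m d pjoint py hpy pzy pzx hpzy_pos hpzx_prob T S hS hleft
    hright Ty htriangular Sy Sx hSsplit hpush
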